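/- arXiv:1104.0654 — 4 statements merged into one kernel-verified Lean document; each statement's English description precedes it below -/
import Mathlib

section
/- Uniqueness of block-sparse representation via the reduced dictionary: let B̄[i] ∈ R^{D×d_i} be full column-rank matrices with range(B̄[i]) = S_i, and B̄ = [B̄[1] … B̄[n]]. Then every signal that can be written as y = Σ_{l=1}^k s_{i_l} with s_{i_l} ∈ S_{i_l} nonzero, for distinct indices i_1,…,i_k, determines the index set {i_l} and the vectors {s_{i_l}} uniquely (among all representations using at most k blocks), if and only if B̄c̄ ≠ 0 for every nonzero vector c̄ with at most 2k nonzero blocks. -/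
/-!
Both sides say that no nonzero family `x i ∈ S i` supported on at most `2k` indices sums to
zero. On the dictionary side this is because `B̄[i]` is a bijection from the `i`-th coefficient
block onto `S i`. On the uniqueness side, two `k`-sparse representations of one signal differ
by such a family; conversely, a `2k`-sparse relation splits into two `k`-sparse representations
of one signal with disjoint supports, which uniqueness forces to be empty.
-/

open scoped BigOperators

/-- The subspace coherence of two subspaces of `R^D`. -/
noncomputable def subCoh {D : ℕ} (S T : Submodule ℝ (EuclideanSpace ℝ (Fin D))) : ℝ :=
  sSup {r : ℝ | ∃ x ∈ S, ∃ z ∈ T, x ≠ 0 ∧ z ≠ 0 ∧ r = |(inner ℝ x z : ℝ)| / (‖x‖ * ‖z‖)}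

/-- The `k`-cumulative subspace coherence `ζ_k` of a collection of subspaces. -/
noncomputable def zeta {D n : ℕ} (S : Fin n → Submodule ℝ (EuclideanSpace ℝ (Fin D)))
    (k : ℕ) : ℝ :=
  sSup {r : ℝ | ∃ (Λ : Finset (Fin n)) (i : Fin n),
    Λ.card = k ∧ i ∉ Λ ∧ r = ∑ j ∈ Λ, subCoh (S i) (S j)}

/-- The mutual subspace coherence `μ_S` of a collection of subspaces. -/
noncomputable def muS {D n : ℕ} (S : Fin n → Submodule ℝ (EuclideanSpace ℝ (Fin D))) : ℝ :=
  sSup {r : ℝ | ∃ i j : Fin n, i ≠ j ∧ r = subCoh (S i) (S j)}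

open Finset

section BlockSparse

variable {ι R M : Type*}

def IsBlockSparse {V : ι → Type*} [∀ i, Zero (V i)] (x : ∀ i, V i) (m : ℕ) : Prop :=
  ∃ Λ : Finset ι, Λ.card ≤ m ∧ ∀ i ∉ Λ, x i = 0

variable [Fintype ι]

def BlockIndependent [Semiring R] [AddCommMonoid M] [Module R M] (S : ι → Submodule R M)
    (m : ℕ) : Prop :=
  ∀ x : ι → M, (∀ i, x i ∈ S i) → IsBlockSparse x m → ∑ i, x i = 0 → x = 0

theorem blockIndependent_iff_of_injective [Semiring R] [AddCommMonoid M] [Module R M]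
    {V : ι → Type*} [∀ i, AddCommMonoid (V i)] [∀ i, Module R (V i)]
    {S : ι → Submodule R M} {B : ∀ i, V i →ₗ[R] M}
    (hinj : ∀ i, Function.Injective (B i)) (hrange : ∀ i, LinearMap.range (B i) = S i)
    {m : ℕ} :
    BlockIndependent S m ↔
      ∀ c : ∀ i, V i, c ≠ 0 → IsBlockSparse c m → ∑ i, B i (c i) ≠ 0 := by
  have hzero : ∀ i (v : V i), B i v = 0 ↔ v = 0 := fun i _ => map_eq_zero_iff _ (hinj i)
  constructor
  · intro hS c hc ⟨Λ, hcard, hΛ⟩ hsum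
    have hx := hS (fun i => B i (c i)) (fun i => hrange i ▸ LinearMap.mem_range_self _ _)
      ⟨Λ, hcard, fun i hi => by simp [hΛ i hi]⟩ hsum
    exact hc (funext fun i => (hzero i _).1 (congrFun hx i))
  · intro hB x hx ⟨Λ, hcard, hΛ⟩ hsum
    choose c hc using fun i => (hrange i ▸ hx i : x i ∈ LinearMap.range (B i))
    have hc0 : c = 0 := by
      by_contra hne
      refine hB c hne ⟨Λ, hcard, fun i hi => ?_⟩ (by simpa only [hc] using hsum)
      exact (hzero i _).1 ((hc i).trans (hΛ i hi))
    funext i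
    rw [← hc i, hc0, Pi.zero_apply, map_zero, Pi.zero_apply]

theorem blockIndependent_add_iff_unique [DecidableEq ι] [Ring R] [AddCommGroup M] [Module R M]
    {S : ι → Submodule R M} {k l : ℕ} :
    BlockIndependent S (k + l) ↔
      ∀ (Λ Λ' : Finset ι) (s s' : ι → M), Λ.card ≤ k → Λ'.card ≤ l →
        (∀ i ∈ Λ, s i ∈ S i ∧ s i ≠ 0) → (∀ i ∈ Λ', s' i ∈ S i ∧ s' i ≠ 0) →
        ∑ i ∈ Λ, s i = ∑ i ∈ Λ', s' i → Λ = Λ' ∧ ∀ i ∈ Λ, s i = s' i := by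
  constructor
  · intro hS Λ Λ' s s' hΛ hΛ' hs hs' hsum
    set x : ι → M := fun i => (if i ∈ Λ then s i else 0) - (if i ∈ Λ' then s' i else 0)
    have hx : x = 0 := by
      refine hS x (fun i => ?_) ⟨Λ ∪ Λ', (card_union_le _ _).trans (by omega), fun i hi => ?_⟩ ?_
      · refine Submodule.sub_mem _ ?_ ?_ <;> split_ifs with h
        exacts [(hs i h).1, zero_mem _, (hs' i h).1, zero_mem _]
      · rw [mem_union, not_or] at hi
        simp [x, hi.1, hi.2]
      · simp only [x, sum_sub_distrib, sum_ite_mem, univ_inter, hsum, sub_self]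
    have hxi : ∀ i, (if i ∈ Λ then s i else 0) = if i ∈ Λ' then s' i else 0 :=
      fun i => sub_eq_zero.1 (congrFun hx i)
    have hΛΛ' : Λ = Λ' := by
      ext i
      specialize hxi i
      by_cases h : i ∈ Λ <;> by_cases h' : i ∈ Λ' <;> simp only [h, h', if_true, if_false] at hxi
      exacts [iff_of_true h h', ((hs i h).2 hxi).elim, ((hs' i h').2 hxi.symm).elim,
        iff_of_false h h']
    refine ⟨hΛΛ', fun i hi => ?_⟩
    simpa [hi, ← hΛΛ'] using hxi i
  · classical
    intro huniq x hx ⟨Λ, hcard, hΛ⟩ hsum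
    set T := univ.filter (x · ≠ 0)
    have hmemT : ∀ i, i ∈ T ↔ x i ≠ 0 := by simp [T]
    have hT : T.card ≤ k + l :=
      (card_le_card fun i hi => not_not.1 fun h => (hmemT i).1 hi (hΛ i h)).trans hcard
    obtain ⟨A, hAT, hA⟩ := exists_subset_card_eq (min_le_left T.card k)
    have hTA : (T \ A).card ≤ l := by rw [card_sdiff_of_subset hAT]; omega
    have hsplit : ∑ i ∈ A, x i = ∑ i ∈ T \ A, -x i := by
      rw [sum_neg_distrib, eq_neg_iff_add_eq_zero, add_comm, sum_sdiff hAT, sum_filter_ne_zero,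
        hsum]
    have hmem : ∀ i ∈ T, x i ∈ S i ∧ x i ≠ 0 := fun i hi => ⟨hx i, (hmemT i).1 hi⟩
    obtain ⟨hAeq, -⟩ := huniq A (T \ A) x (-x) (hA ▸ min_le_right _ _) hTA
      (fun i hi => hmem i (hAT hi))
      (fun i hi => ⟨neg_mem (hx i), neg_ne_zero.2 (hmem i (sdiff_subset hi)).2⟩) hsplit
    have hTempty : T = ∅ := by
      have hdisj : Disjoint A (T \ A) := disjoint_sdiff
      rw [← hAeq, disjoint_self_iff_empty] at hdisj
      rw [← sdiff_union_of_subset hAT, ← hAeq, hdisj, union_empty]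
    funext i
    by_contra h
    exact notMem_empty i (hTempty ▸ (hmemT i).2 h)

end BlockSparse

/-- Proposition 2: with `B̄[i] ∈ R^{D×d_i}` full column-rank and
`range B̄[i] = S_i`, every signal with a `k`-block-sparse representation has uniquely
determined blocks and subspace vectors, if and only if `B̄ c̄ ≠ 0` for every nonzero
`2k`-block-sparse `c̄`. -/
theorem uniqueness_iff_reduced_dictionary {D n k : ℕ} (d : Fin n → ℕ)
    (S : Fin n → Submodule ℝ (EuclideanSpace ℝ (Fin D)))
    (Bbar : ∀ i : Fin n, (Fin (d i) → ℝ) →ₗ[ℝ] EuclideanSpace ℝ (Fin D))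
    (hinj : ∀ i, Function.Injective (Bbar i))
    (hrange : ∀ i, LinearMap.range (Bbar i) = S i) :
    (∀ c : ∀ i : Fin n, Fin (d i) → ℝ, c ≠ 0 →
        (∃ Λ : Finset (Fin n), Λ.card ≤ 2 * k ∧ ∀ i ∉ Λ, c i = 0) →
        ∑ i, Bbar i (c i) ≠ 0) ↔
    (∀ (Λ Λ' : Finset (Fin n)) (s s' : Fin n → EuclideanSpace ℝ (Fin D)),
        Λ.card ≤ k → Λ'.card ≤ k →
        (∀ i ∈ Λ, s i ∈ S i ∧ s i ≠ 0) → (∀ i ∈ Λ', s' i ∈ S i ∧ s' i ≠ 0) →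
        ∑ i ∈ Λ, s i = ∑ i ∈ Λ', s' i →
        Λ = Λ' ∧ ∀ i ∈ Λ, s i = s' i) := by
  have h := (blockIndependent_iff_of_injective hinj hrange).symm.trans
    (blockIndependent_add_iff_unique (k := k) (l := k))
  rwa [← two_mul] at h
end

section
/- Matrix coherence bound (Lemma 2): Let E_k ∈ R^{D×k} have columns e_{i_1},…,e_{i_k} with e_{i_l} ∈ S_{i_l} and 1−α ≤ ‖e_{i_l}‖₂² ≤ 1+α for α ∈ [0,1), and let E_k̂ ∈ R^{D×(n−k)} have columns e_{i_l} ∈ S_{i_l} (l = k+1,…,n) with ‖e_{i_l}‖₂² ≤ 1+β. If α + (1+α)ζ_{k−1} < 1, then E_k^T E_k is invertible and ‖(E_k^T E_k)^{-1} E_k^T E_k̂‖_{1,1} ≤ √((1+α)(1+β))·ζ_k / (1 − [α + (1+α)ζ_{k−1}]). -/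
open scoped BigOperators

/-- The `ℓ₁`-induced operator norm of a matrix: the maximum column `ℓ₁` norm. -/
noncomputable def norm11 {α β : Type*} [Fintype α] (M : Matrix α β ℝ) : ℝ :=
  sSup {r : ℝ | ∃ j : β, r = ∑ i, |M i j|}


/-! Write the Gram matrix `G = E_kᵀ E_k` as `1 - Δ`. The diagonal entries of `Δ` are at most `α`
in absolute value and the off-diagonal part of each column sums to at most `(1 + α) ζ_{k-1}`, so
every column of `Δ` has `ℓ₁` norm at most `δ = α + (1 + α) ζ_{k-1} < 1`. Then
`‖G x‖₁ ≥ (1 - δ) ‖x‖₁`, which makes `G` invertible with `‖G⁻¹‖_{1,1} ≤ 1 / (1 - δ)`, while every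
column of `E_kᵀ E_k̂` has `ℓ₁` norm at most `√((1 + α)(1 + β)) ζ_k`. -/

section Coherence

variable {D n : ℕ}

lemma abs_inner_div_norm_mul_norm_le_one {E : Type*} [NormedAddCommGroup E] [InnerProductSpace ℝ E]
    (x z : E) :
    |(inner ℝ x z : ℝ)| / (‖x‖ * ‖z‖) ≤ 1 :=
  div_le_one_of_le₀ (abs_real_inner_le_norm x z) (by positivity)

lemma subCoh_nonneg (S T : Submodule ℝ (EuclideanSpace ℝ (Fin D))) : 0 ≤ subCoh S T :=
  Real.sSup_nonneg fun _ ⟨_, _, _, _, _, _, hr⟩ => hr ▸ by positivity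

lemma subCoh_le_one (S T : Submodule ℝ (EuclideanSpace ℝ (Fin D))) : subCoh S T ≤ 1 :=
  Real.sSup_le (fun _ ⟨x, _, z, _, _, _, hr⟩ => hr ▸ abs_inner_div_norm_mul_norm_le_one x z)
    zero_le_one

lemma abs_inner_le_norm_mul_norm_mul_subCoh {S T : Submodule ℝ (EuclideanSpace ℝ (Fin D))}
    {x z : EuclideanSpace ℝ (Fin D)} (hx : x ∈ S) (hz : z ∈ T) :
    |(inner ℝ x z : ℝ)| ≤ ‖x‖ * ‖z‖ * subCoh S T := by
  rcases eq_or_ne x 0 with rfl | hx0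
  · simp
  rcases eq_or_ne z 0 with rfl | hz0
  · simp
  have hpos : 0 < ‖x‖ * ‖z‖ := by positivity
  have hle : |(inner ℝ x z : ℝ)| / (‖x‖ * ‖z‖) ≤ subCoh S T :=
    le_csSup ⟨1, fun _ ⟨x, _, z, _, _, _, hr⟩ => hr ▸ abs_inner_div_norm_mul_norm_le_one x z⟩
      ⟨x, hx, z, hz, hx0, hz0, rfl⟩
  rwa [div_le_iff₀ hpos, mul_comm] at hle

lemma abs_inner_le_sqrt_mul_subCoh {S T : Submodule ℝ (EuclideanSpace ℝ (Fin D))}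
    {x z : EuclideanSpace ℝ (Fin D)} {a b : ℝ} (hx : x ∈ S) (hz : z ∈ T)
    (ha : ‖x‖ ^ 2 ≤ a) (hb : ‖z‖ ^ 2 ≤ b) :
    |(inner ℝ x z : ℝ)| ≤ √(a * b) * subCoh S T := by
  have hnorm : ‖x‖ * ‖z‖ ≤ √(a * b) := by
    rw [← Real.sqrt_sq (by positivity : 0 ≤ ‖x‖ * ‖z‖), mul_pow]
    exact Real.sqrt_le_sqrt (mul_le_mul ha hb (by positivity) ((sq_nonneg _).trans ha))
  exact (abs_inner_le_norm_mul_norm_mul_subCoh hx hz).trans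
    (mul_le_mul_of_nonneg_right hnorm (subCoh_nonneg S T))

lemma sum_subCoh_le_zeta (S : Fin n → Submodule ℝ (EuclideanSpace ℝ (Fin D)))
    {Λ : Finset (Fin n)} {i : Fin n} {m : ℕ} (hΛ : Λ.card = m) (hi : i ∉ Λ) :
    ∑ j ∈ Λ, subCoh (S i) (S j) ≤ zeta S m := by
  refine le_csSup ⟨m, ?_⟩ ⟨Λ, i, hΛ, hi, rfl⟩
  rintro _ ⟨Λ', i', hcard, -, rfl⟩
  calc ∑ j ∈ Λ', subCoh (S i') (S j) ≤ ∑ _j ∈ Λ', (1 : ℝ) :=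
        Finset.sum_le_sum fun j _ => subCoh_le_one _ _
    _ = m := by simp [hcard]

lemma zeta_nonneg (S : Fin n → Submodule ℝ (EuclideanSpace ℝ (Fin D))) (m : ℕ) :
    0 ≤ zeta S m :=
  Real.sSup_nonneg fun _ ⟨_, _, _, _, hr⟩ =>
    hr ▸ Finset.sum_nonneg fun _ _ => subCoh_nonneg _ _

end Coherence

section ColumnSums

open Matrix

variable {ι κ : Type*} [Fintype ι]

lemma norm11_le {M : Matrix ι κ ℝ} {c : ℝ} (hM : ∀ j, ∑ i, |M i j| ≤ c) (hc : 0 ≤ c) :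
    norm11 M ≤ c :=
  Real.sSup_le (fun _ ⟨j, hr⟩ => hr ▸ hM j) hc

lemma sum_abs_mulVec_le [Fintype κ] {M : Matrix ι κ ℝ} {c : ℝ} (hM : ∀ l, ∑ i, |M i l| ≤ c)
    (x : κ → ℝ) : ∑ i, |(M *ᵥ x) i| ≤ c * ∑ l, |x l| :=
  calc ∑ i, |(M *ᵥ x) i| ≤ ∑ i, ∑ l, |M i l| * |x l| :=
        Finset.sum_le_sum fun i _ =>
          (Finset.abs_sum_le_sum_abs _ _).trans_eq (by simp only [abs_mul])
    _ = ∑ l, (∑ i, |M i l|) * |x l| := by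
        rw [Finset.sum_comm]
        simp only [Finset.sum_mul]
    _ ≤ ∑ l, c * |x l| :=
        Finset.sum_le_sum fun l _ => mul_le_mul_of_nonneg_right (hM l) (abs_nonneg _)
    _ = c * ∑ l, |x l| := (Finset.mul_sum _ _ _).symm

variable [DecidableEq ι] {G : Matrix ι ι ℝ} {δ : ℝ}

lemma one_sub_mul_sum_abs_le_sum_abs_mulVec (hG : ∀ l, ∑ i, |(1 - G) i l| ≤ δ)
    (x : ι → ℝ) : (1 - δ) * ∑ i, |x i| ≤ ∑ i, |(G *ᵥ x) i| := by
  have hx : x = G *ᵥ x + (1 - G) *ᵥ x := by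
    rw [sub_mulVec, one_mulVec, add_sub_cancel]
  have htri : ∑ i, |x i| ≤ ∑ i, |(G *ᵥ x) i| + ∑ i, |((1 - G) *ᵥ x) i| := by
    rw [← Finset.sum_add_distrib]
    exact Finset.sum_le_sum fun i _ => (congrArg abs (congrFun hx i)).trans_le (abs_add_le _ _)
  linarith [sum_abs_mulVec_le hG x]

lemma isUnit_of_sum_abs_one_sub_le (hG : ∀ l, ∑ i, |(1 - G) i l| ≤ δ) (hδ : δ < 1) :
    IsUnit G := by
  rw [← mulVec_injective_iff_isUnit, ← coe_mulVecLin, injective_iff_map_eq_zero]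
  intro x hx
  replace hx : G *ᵥ x = 0 := hx
  have hsum : (1 - δ) * ∑ i, |x i| ≤ 0 := by
    simpa [hx] using one_sub_mul_sum_abs_le_sum_abs_mulVec hG x
  have hzero : ∑ i, |x i| = 0 :=
    le_antisymm (nonpos_of_mul_nonpos_right hsum (by linarith))
      (Finset.sum_nonneg fun i _ => abs_nonneg _)
  funext i
  simpa using (Finset.sum_eq_zero_iff_of_nonneg fun i _ => abs_nonneg (x i)).1 hzero i
    (Finset.mem_univ i)

lemma norm11_inv_mul_le (hG : ∀ l, ∑ i, |(1 - G) i l| ≤ δ) (hδ : δ < 1)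
    {B : Matrix ι κ ℝ} {c : ℝ} (hB : ∀ j, ∑ i, |B i j| ≤ c) (hc : 0 ≤ c) :
    norm11 (G⁻¹ * B) ≤ c / (1 - δ) := by
  have hdet : IsUnit G.det := (isUnit_iff_isUnit_det G).1 (isUnit_of_sum_abs_one_sub_le hG hδ)
  refine norm11_le (fun j => ?_) (div_nonneg hc (by linarith))
  set b : ι → ℝ := fun i => B i j
  have hGx : G *ᵥ (G⁻¹ *ᵥ b) = b := by
    rw [mulVec_mulVec, mul_nonsing_inv G hdet, one_mulVec]
  rw [le_div_iff₀ (by linarith), mul_comm]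
  calc (1 - δ) * ∑ i, |(G⁻¹ * B) i j| = (1 - δ) * ∑ i, |(G⁻¹ *ᵥ b) i| := rfl
    _ ≤ ∑ i, |b i| := by
        simpa only [hGx] using one_sub_mul_sum_abs_le_sum_abs_mulVec hG (G⁻¹ *ᵥ b)
    _ ≤ c := hB j

end ColumnSums

section GramMatrix

variable {D n k : ℕ} (S : Fin n → Submodule ℝ (EuclideanSpace ℝ (Fin D)))
  {Λ : Finset (Fin n)} {e : Fin n → EuclideanSpace ℝ (Fin D)}

lemma sum_abs_one_sub_gram_le (hΛ : Λ.card = k) (he : ∀ i, e i ∈ S i) {α : ℝ}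
    (hk : ∀ i ∈ Λ, 1 - α ≤ ‖e i‖ ^ 2 ∧ ‖e i‖ ^ 2 ≤ 1 + α) (l : {i // i ∈ Λ}) :
    ∑ i : {i // i ∈ Λ},
        |(1 - Matrix.of fun (i j : {i // i ∈ Λ}) => (inner ℝ (e i.1) (e j.1) : ℝ)) i l| ≤
      α + (1 + α) * zeta S (k - 1) := by
  set f : Fin n → ℝ := fun j => |(if j = l.1 then (1 : ℝ) else 0) - inner ℝ (e j) (e l.1)|
  have hsum : ∑ i : {i // i ∈ Λ},
      |(1 - Matrix.of fun (i j : {i // i ∈ Λ}) => (inner ℝ (e i.1) (e j.1) : ℝ)) i l| =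
      ∑ j ∈ Λ, f j := by
    rw [← Finset.sum_coe_sort Λ f]
    refine Finset.sum_congr rfl fun i _ => ?_
    simp only [f, Matrix.sub_apply, Matrix.one_apply, Matrix.of_apply, Subtype.ext_iff]
  have h1α : 0 ≤ 1 + α := (sq_nonneg _).trans (hk l.1 l.2).2
  have hdiag : f l ≤ α := by
    simp only [f, if_pos, real_inner_self_eq_norm_sq, abs_sub_le_iff]
    constructor <;> linarith [hk l.1 l.2]
  have hoff : ∑ j ∈ Λ.erase l, f j ≤ (1 + α) * zeta S (k - 1) :=
    calc ∑ j ∈ Λ.erase l, f j ≤ ∑ j ∈ Λ.erase l, (1 + α) * subCoh (S l) (S j) :=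
          Finset.sum_le_sum fun j hj => by
            rw [← Real.sqrt_mul_self h1α]
            simp only [f, if_neg (Finset.ne_of_mem_erase hj), zero_sub, abs_neg]
            rw [real_inner_comm]
            exact abs_inner_le_sqrt_mul_subCoh (he _) (he _) (hk l.1 l.2).2
              (hk j (Finset.mem_of_mem_erase hj)).2
      _ = (1 + α) * ∑ j ∈ Λ.erase l, subCoh (S l) (S j) := (Finset.mul_sum _ _ _).symm
      _ ≤ (1 + α) * zeta S (k - 1) :=
          mul_le_mul_of_nonneg_left
            (sum_subCoh_le_zeta S (by rw [Finset.card_erase_of_mem l.2, hΛ])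
              (Finset.notMem_erase _ _)) h1α
  rw [hsum, ← Finset.add_sum_erase Λ f l.2]
  linarith

lemma sum_abs_inner_le_sqrt_mul_zeta (hΛ : Λ.card = k) (he : ∀ i, e i ∈ S i) {a b : ℝ}
    (ha : ∀ i ∈ Λ, ‖e i‖ ^ 2 ≤ a) {j : Fin n} (hj : j ∉ Λ) (hb : ‖e j‖ ^ 2 ≤ b) :
    ∑ i : {i // i ∈ Λ}, |(inner ℝ (e i.1) (e j) : ℝ)| ≤ √(a * b) * zeta S k :=
  calc ∑ i : {i // i ∈ Λ}, |(inner ℝ (e i.1) (e j) : ℝ)|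
        ≤ ∑ i : {i // i ∈ Λ}, √(a * b) * subCoh (S j) (S i) :=
        Finset.sum_le_sum fun i _ => by
          rw [real_inner_comm, mul_comm a]
          exact abs_inner_le_sqrt_mul_subCoh (he j) (he i) hb (ha i i.2)
    _ = √(a * b) * ∑ i ∈ Λ, subCoh (S j) (S i) := by
        rw [Finset.sum_coe_sort Λ fun i => √(a * b) * subCoh (S j) (S i), Finset.mul_sum]
    _ ≤ √(a * b) * zeta S k :=
        mul_le_mul_of_nonneg_left (sum_subCoh_le_zeta S hΛ hj) (Real.sqrt_nonneg _)

end GramMatrix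

theorem lemma2_matrix_bound_general {D n k : ℕ} (α β : ℝ)
    (S : Fin n → Submodule ℝ (EuclideanSpace ℝ (Fin D)))
    (Λ : Finset (Fin n)) (hΛ : Λ.card = k)
    (e : Fin n → EuclideanSpace ℝ (Fin D))
    (he : ∀ i, e i ∈ S i)
    (hk : ∀ i ∈ Λ, 1 - α ≤ ‖e i‖ ^ 2 ∧ ‖e i‖ ^ 2 ≤ 1 + α)
    (hkc : ∀ i ∉ Λ, ‖e i‖ ^ 2 ≤ 1 + β)
    (hcond : α + (1 + α) * zeta S (k - 1) < 1) :
    IsUnit (Matrix.of fun (i j : {i // i ∈ Λ}) => (inner ℝ (e i.1) (e j.1) : ℝ)) ∧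
    norm11 ((Matrix.of fun (i j : {i // i ∈ Λ}) => (inner ℝ (e i.1) (e j.1) : ℝ))⁻¹ *
        Matrix.of fun (i : {i // i ∈ Λ}) (j : {i // i ∈ Λᶜ}) => (inner ℝ (e i.1) (e j.1) : ℝ)) ≤
      Real.sqrt ((1 + α) * (1 + β)) * zeta S k /
        (1 - (α + (1 + α) * zeta S (k - 1))) := by
  have hdiag := sum_abs_one_sub_gram_le S hΛ he hk
  have hcross (j : {i // i ∈ Λᶜ}) :=
    sum_abs_inner_le_sqrt_mul_zeta S hΛ he (fun i hi => (hk i hi).2) (Finset.mem_compl.1 j.2)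
      (hkc j.1 (Finset.mem_compl.1 j.2))
  exact ⟨isUnit_of_sum_abs_one_sub_le hdiag hcond,
    norm11_inv_mul_le hdiag hcond hcross (mul_nonneg (Real.sqrt_nonneg _) (zeta_nonneg S k))⟩

/-- Lemma 2: bound on `‖(E_kᵀE_k)⁻¹ E_kᵀ E_k̂‖_{1,1}`. -/
theorem lemma2_matrix_bound {D n k : ℕ} (α β : ℝ) (hα0 : 0 ≤ α) (hα1 : α < 1)
    (S : Fin n → Submodule ℝ (EuclideanSpace ℝ (Fin D)))
    (hdisj : ∀ i j : Fin n, i ≠ j → S i ⊓ S j = ⊥)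
    (Λ : Finset (Fin n)) (hΛ : Λ.card = k)
    (e : Fin n → EuclideanSpace ℝ (Fin D))
    (he : ∀ i, e i ∈ S i)
    (hk : ∀ i ∈ Λ, 1 - α ≤ ‖e i‖ ^ 2 ∧ ‖e i‖ ^ 2 ≤ 1 + α)
    (hkc : ∀ i ∉ Λ, ‖e i‖ ^ 2 ≤ 1 + β)
    (hcond : α + (1 + α) * zeta S (k - 1) < 1) :
    IsUnit (Matrix.of fun (i j : {i // i ∈ Λ}) => (inner ℝ (e i.1) (e j.1) : ℝ)) ∧
    norm11 ((Matrix.of fun (i j : {i // i ∈ Λ}) => (inner ℝ (e i.1) (e j.1) : ℝ))⁻¹ *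
        Matrix.of fun (i : {i // i ∈ Λ}) (j : {i // i ∈ Λᶜ}) => (inner ℝ (e i.1) (e j.1) : ℝ)) ≤
      Real.sqrt ((1 + α) * (1 + β)) * zeta S k /
        (1 - (α + (1 + α) * zeta S (k - 1))) :=
  lemma2_matrix_bound_general α β S Λ hΛ e he hk hkc hcond
end

section
/- Sufficient condition for exactness of P_{ℓq/ℓ1} (Theorem 1, sufficiency direction): suppose that for every k-subset Λ_k of {1,…,n} and every nonzero x in (⊕_{i∈Λ_k}S_i) ∩ (⊕_{i∉Λ_k}S_i), the minimum of Σ_{i∈Λ_k}‖c[i]‖_q over representations x = Σ_{i∈Λ_k}B[i]c[i] is strictly less than the minimum of Σ_{i∉Λ_k}‖c[i]‖_q over representations x = Σ_{i∉Λ_k}B[i]c[i]. Then for every signal y with a unique k-block-sparse representation supported on blocks Λ_k, every minimizer c* of Σ_{i=1}^n‖c[i]‖_q subject to y = Bc has all nonzero blocks contained in Λ_k. -/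
open scoped BigOperators

/-- The `ℓ_q` norm of a finite vector: `(∑ |v i|^q)^{1/q}`. -/
noncomputable def lqnorm (q : ℝ) {ι : Type*} [Fintype ι] (v : ι → ℝ) : ℝ :=
  (∑ i, |v i| ^ q) ^ (1 / q)

/-!
If a minimizer `c⋆` had a nonzero block off `Λ`, the vector `x` synthesized by those blocks
lies both in `⊕_{i ∉ Λ} S_i` and, being `y` minus the blocks on `Λ`, in `⊕_{i ∈ Λ} S_i`.
Either `x = 0` and those blocks can simply be dropped, or the exchange condition yields a
representation of `x` on `Λ` that is cheaper than the off-`Λ` blocks of `c⋆`; adding it to the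
`Λ`-blocks of `c⋆` (triangle inequality for `‖·‖_q`) gives a strictly cheaper feasible point.
-/

lemma lqnorm_nonneg (q : ℝ) {ι : Type*} [Fintype ι] (v : ι → ℝ) : 0 ≤ lqnorm q v :=
  Real.rpow_nonneg (Finset.sum_nonneg fun _ _ => Real.rpow_nonneg (abs_nonneg _) _) _

lemma lqnorm_zero {q : ℝ} (hq : q ≠ 0) {ι : Type*} [Fintype ι] : lqnorm q (0 : ι → ℝ) = 0 := by
  simp [lqnorm, Real.zero_rpow hq, Real.zero_rpow (inv_ne_zero hq)]

lemma lqnorm_pos (q : ℝ) {ι : Type*} [Fintype ι] {v : ι → ℝ} (hv : v ≠ 0) : 0 < lqnorm q v := by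
  obtain ⟨i, hi⟩ := Function.ne_iff.mp hv
  refine Real.rpow_pos_of_pos (Finset.sum_pos' (fun _ _ => Real.rpow_nonneg (abs_nonneg _) _)
    ⟨i, Finset.mem_univ i, Real.rpow_pos_of_pos (abs_pos.mpr hi) _⟩) _

lemma lqnorm_add_le {q : ℝ} (hq : 1 ≤ q) {ι : Type*} [Fintype ι] (v w : ι → ℝ) :
    lqnorm q (v + w) ≤ lqnorm q v + lqnorm q w :=
  Real.Lp_add_le Finset.univ v w hq

section BlockSums

variable {ι : Type*} {E : ι → Type*} {M : Type*} [AddCommMonoid M]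

lemma sum_apply_eq_sum_of_forall_notMem [Fintype ι] [∀ i, Zero (E i)] (F : ∀ i, E i → M)
    (hF : ∀ i, F i 0 = 0) {Λ : Finset ι} {c : ∀ i, E i} (hc : ∀ i ∉ Λ, c i = 0) :
    ∑ i, F i (c i) = ∑ i ∈ Λ, F i (c i) :=
  (Finset.sum_subset (Finset.subset_univ Λ) fun i _ hi => by rw [hc i hi, hF]).symm

lemma sum_apply_piecewise_zero [Fintype ι] [DecidableEq ι] [∀ i, Zero (E i)]
    (F : ∀ i, E i → M) (hF : ∀ i, F i 0 = 0) (Λ : Finset ι) (c : ∀ i, E i) :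
    ∑ i, F i (Λ.piecewise c 0 i) = ∑ i ∈ Λ, F i (c i) := by
  rw [sum_apply_eq_sum_of_forall_notMem F hF fun i hi => Λ.piecewise_eq_of_notMem c 0 hi]
  exact Finset.sum_congr rfl fun i hi => by rw [Λ.piecewise_eq_of_mem c 0 hi]

variable [∀ i, AddCommGroup (E i)] [∀ i, Module ℝ (E i)] [Module ℝ M]

lemma exists_eq_sum_of_mem_iSup_range (B : ∀ i, E i →ₗ[ℝ] M) {Λ : Finset ι} {x : M}
    (hx : x ∈ ⨆ i ∈ Λ, LinearMap.range (B i)) : ∃ c : ∀ i, E i, x = ∑ i ∈ Λ, B i (c i) := by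
  obtain ⟨μ, hμ⟩ := (Submodule.mem_iSup_finset_iff_exists_sum _ x).mp hx
  choose c hc using fun i => (μ i).2
  exact ⟨c, hμ ▸ Finset.sum_congr rfl fun i _ => (hc i).symm⟩

lemma sum_apply_piecewise_add [Fintype ι] [DecidableEq ι] (B : ∀ i, E i →ₗ[ℝ] M) (Λ : Finset ι)
    (c c' : ∀ i, E i)
    (hc' : ∑ i, B i (c' i) = ∑ i ∈ Λᶜ, B i (c i)) :
    ∑ i, B i ((Λ.piecewise c 0 + c') i) = ∑ i, B i (c i) := by
  simp only [Pi.add_apply, map_add, Finset.sum_add_distrib,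
    sum_apply_piecewise_zero (fun i => B i) (fun i => map_zero _), hc', Finset.sum_add_sum_compl]

end BlockSums

section Exchange

variable {ι : Type*} [Fintype ι] [DecidableEq ι] {m : ι → ℕ} {q : ℝ}

lemma lqnorm_sum_piecewise_add_lt (hq : 1 ≤ q) {Λ : Finset ι} (c c' : ∀ i, Fin (m i) → ℝ)
    (hc' : ∀ i ∉ Λ, c' i = 0)
    (hlt : ∑ i ∈ Λ, lqnorm q (c' i) < ∑ i ∈ Λᶜ, lqnorm q (c i)) :
    ∑ i, lqnorm q ((Λ.piecewise c 0 + c') i) < ∑ i, lqnorm q (c i) := by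
  have hq0 : q ≠ 0 := by linarith
  have hsupp : ∀ i ∉ Λ, (Λ.piecewise c 0 + c') i = 0 := fun i hi => by
    simp [Λ.piecewise_eq_of_notMem c 0 hi, hc' i hi]
  calc ∑ i, lqnorm q ((Λ.piecewise c 0 + c') i)
      = ∑ i ∈ Λ, lqnorm q (c i + c' i) := by
        rw [sum_apply_eq_sum_of_forall_notMem _ (fun _ => lqnorm_zero hq0) hsupp]
        exact Finset.sum_congr rfl fun i hi => by simp [Λ.piecewise_eq_of_mem c 0 hi]
    _ ≤ ∑ i ∈ Λ, lqnorm q (c i) + ∑ i ∈ Λ, lqnorm q (c' i) := by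
        rw [← Finset.sum_add_distrib]
        exact Finset.sum_le_sum fun i _ => lqnorm_add_le hq _ _
    _ < ∑ i ∈ Λ, lqnorm q (c i) + ∑ i ∈ Λᶜ, lqnorm q (c i) := by gcongr
    _ = ∑ i, lqnorm q (c i) := Finset.sum_add_sum_compl _ _

variable {V : Type*} [AddCommGroup V] [Module ℝ V]

lemma exists_cheaper_rep_of_sInf_lt (B : ∀ i, (Fin (m i) → ℝ) →ₗ[ℝ] V) {Λ : Finset ι} {x : V}
    (c : ∀ i, Fin (m i) → ℝ) (hx : x = ∑ i ∈ Λᶜ, B i (c i))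
    (hxΛ : x ∈ ⨆ i ∈ Λ, LinearMap.range (B i))
    (hlt : sInf {r : ℝ | ∃ c : ∀ i, Fin (m i) → ℝ, (∀ i ∉ Λ, c i = 0) ∧
          x = ∑ i, B i (c i) ∧ r = ∑ i ∈ Λ, lqnorm q (c i)} <
      sInf {r : ℝ | ∃ c : ∀ i, Fin (m i) → ℝ, (∀ i ∈ Λ, c i = 0) ∧
          x = ∑ i, B i (c i) ∧ r = ∑ i ∈ Λᶜ, lqnorm q (c i)}) :
    ∃ c' : ∀ i, Fin (m i) → ℝ, (∀ i ∉ Λ, c' i = 0) ∧ x = ∑ i, B i (c' i) ∧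
      ∑ i ∈ Λ, lqnorm q (c' i) < ∑ i ∈ Λᶜ, lqnorm q (c i) := by
  have hB0 : ∀ i, B i 0 = 0 := fun i => map_zero _
  obtain ⟨d, hd⟩ := exists_eq_sum_of_mem_iSup_range B hxΛ
  have hcost_mem : ∑ i ∈ Λᶜ, lqnorm q (c i) ∈ {r : ℝ | ∃ c : ∀ i, Fin (m i) → ℝ,
      (∀ i ∈ Λ, c i = 0) ∧ x = ∑ i, B i (c i) ∧ r = ∑ i ∈ Λᶜ, lqnorm q (c i)} :=
    ⟨Λᶜ.piecewise c 0, fun i hi => Λᶜ.piecewise_eq_of_notMem c 0 (Finset.notMem_compl.mpr hi),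
      by rw [sum_apply_piecewise_zero _ hB0, hx],
      Finset.sum_congr rfl fun i hi => by rw [Λᶜ.piecewise_eq_of_mem c 0 hi]⟩
  have hlt_cost := hlt.trans_le (csInf_le ⟨0, by
    rintro _ ⟨c, -, -, rfl⟩
    exact Finset.sum_nonneg fun i _ => lqnorm_nonneg q _⟩ hcost_mem)
  obtain ⟨_, ⟨c', hc', hxc', rfl⟩, hlt'⟩ := exists_lt_of_csInf_lt
    (by exact ⟨_, Λ.piecewise d 0, fun i hi => Λ.piecewise_eq_of_notMem d 0 hi,
      by rw [sum_apply_piecewise_zero _ hB0, hd], rfl⟩) hlt_cost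
  exact ⟨c', hc', hxc', hlt'⟩

end Exchange

theorem Plq_l1_sufficiency_general {D n k : ℕ} (q : ℝ) (hq : 1 ≤ q) (m : Fin n → ℕ)
    (S : Fin n → Submodule ℝ (EuclideanSpace ℝ (Fin D)))
    (B : ∀ i : Fin n, (Fin (m i) → ℝ) →ₗ[ℝ] EuclideanSpace ℝ (Fin D))
    (hrange : ∀ i, LinearMap.range (B i) = S i)
    (hexch : ∀ (Λ : Finset (Fin n)) (x : EuclideanSpace ℝ (Fin D)),
      Λ.card = k → x ≠ 0 → x ∈ (⨆ i ∈ Λ, S i) → x ∈ (⨆ i ∈ Λᶜ, S i) →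
      sInf {r : ℝ | ∃ c : ∀ i : Fin n, Fin (m i) → ℝ, (∀ i ∉ Λ, c i = 0) ∧
          x = ∑ i, B i (c i) ∧ r = ∑ i ∈ Λ, lqnorm q (c i)} <
      sInf {r : ℝ | ∃ c : ∀ i : Fin n, Fin (m i) → ℝ, (∀ i ∈ Λ, c i = 0) ∧
          x = ∑ i, B i (c i) ∧ r = ∑ i ∈ Λᶜ, lqnorm q (c i)})
    -- a signal `y` with a unique `k`-block-sparse representation supported on `Λk`
    (y : EuclideanSpace ℝ (Fin D)) (Λk : Finset (Fin n)) (hcard : Λk.card = k)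
    (s : Fin n → EuclideanSpace ℝ (Fin D))
    (hs : ∀ i ∈ Λk, s i ∈ S i ∧ s i ≠ 0) (hy : y = ∑ i ∈ Λk, s i)
    -- a minimizer of `P_{ℓq/ℓ1}`
    (cstar : ∀ i : Fin n, Fin (m i) → ℝ) (hfeas : y = ∑ i, B i (cstar i))
    (hopt : ∀ c : ∀ i : Fin n, Fin (m i) → ℝ, y = ∑ i, B i (c i) →
      ∑ i, lqnorm q (cstar i) ≤ ∑ i, lqnorm q (c i)) :
    ∀ i ∉ Λk, cstar i = 0 := by
  obtain rfl : S = fun i => LinearMap.range (B i) := funext fun i => (hrange i).symm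
  intro i₀ hi₀
  by_contra hne
  set x := ∑ i ∈ Λkᶜ, B i (cstar i) with hx
  have hpos : 0 < ∑ i ∈ Λkᶜ, lqnorm q (cstar i) :=
    Finset.sum_pos' (fun _ _ => lqnorm_nonneg q _)
      ⟨i₀, Finset.mem_compl.mpr hi₀, lqnorm_pos q hne⟩
  have hxΛ : x ∈ ⨆ i ∈ Λk, LinearMap.range (B i) := by
    have hxy : x = y - ∑ i ∈ Λk, B i (cstar i) := by
      rw [hfeas, ← Finset.sum_add_sum_compl Λk, add_sub_cancel_left]
    rw [hxy, hy]
    exact Submodule.sub_mem _ (Submodule.sum_mem_biSup fun i hi => (hs i hi).1)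
      (Submodule.sum_mem_biSup fun i _ => LinearMap.mem_range_self _ _)
  have hxΛc : x ∈ ⨆ i ∈ Λkᶜ, LinearMap.range (B i) :=
    Submodule.sum_mem_biSup fun i _ => LinearMap.mem_range_self _ _
  obtain ⟨c', hc'Λ, hc'x, hc'lt⟩ : ∃ c' : ∀ i, Fin (m i) → ℝ, (∀ i ∉ Λk, c' i = 0) ∧
      x = ∑ i, B i (c' i) ∧ ∑ i ∈ Λk, lqnorm q (c' i) < ∑ i ∈ Λkᶜ, lqnorm q (cstar i) := by
    by_cases hx0 : x = 0
    · exact ⟨0, fun _ _ => rfl, by simp [hx0], by simpa [lqnorm_zero (by linarith : q ≠ 0)]⟩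
    · exact exists_cheaper_rep_of_sInf_lt B cstar hx hxΛ (hexch Λk x hcard hx0 hxΛ hxΛc)
  have hfeas' := (sum_apply_piecewise_add B Λk cstar c' hc'x.symm).trans hfeas.symm
  exact (hopt _ hfeas'.symm).not_gt (lqnorm_sum_piecewise_add_lt hq cstar c' hc'Λ hc'lt)

/-- Theorem 1, sufficiency: under the exchange condition, every minimizer
of `P_{ℓq/ℓ1}` for a signal with a unique `k`-block-sparse representation on blocks `Λ_k`
has all its nonzero blocks inside `Λ_k`. -/
theorem Plq_l1_sufficiency {D n k : ℕ} (q : ℝ) (hq : 1 ≤ q) (m : Fin n → ℕ)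
    (S : Fin n → Submodule ℝ (EuclideanSpace ℝ (Fin D)))
    (B : ∀ i : Fin n, (Fin (m i) → ℝ) →ₗ[ℝ] EuclideanSpace ℝ (Fin D))
    (hrange : ∀ i, LinearMap.range (B i) = S i)
    (hdisj : ∀ i j : Fin n, i ≠ j → S i ⊓ S j = ⊥)
    (hexch : ∀ (Λ : Finset (Fin n)) (x : EuclideanSpace ℝ (Fin D)),
      Λ.card = k → x ≠ 0 → x ∈ (⨆ i ∈ Λ, S i) → x ∈ (⨆ i ∈ Λᶜ, S i) →
      sInf {r : ℝ | ∃ c : ∀ i : Fin n, Fin (m i) → ℝ, (∀ i ∉ Λ, c i = 0) ∧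
          x = ∑ i, B i (c i) ∧ r = ∑ i ∈ Λ, lqnorm q (c i)} <
      sInf {r : ℝ | ∃ c : ∀ i : Fin n, Fin (m i) → ℝ, (∀ i ∈ Λ, c i = 0) ∧
          x = ∑ i, B i (c i) ∧ r = ∑ i ∈ Λᶜ, lqnorm q (c i)})
    -- a signal `y` with a unique `k`-block-sparse representation supported on `Λk`
    (y : EuclideanSpace ℝ (Fin D)) (Λk : Finset (Fin n)) (hcard : Λk.card = k)
    (s : Fin n → EuclideanSpace ℝ (Fin D))
    (hs : ∀ i ∈ Λk, s i ∈ S i ∧ s i ≠ 0) (hy : y = ∑ i ∈ Λk, s i)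
    (huniq : ∀ (Λ' : Finset (Fin n)) (s' : Fin n → EuclideanSpace ℝ (Fin D)),
      Λ'.card ≤ k → (∀ i ∈ Λ', s' i ∈ S i ∧ s' i ≠ 0) → y = ∑ i ∈ Λ', s' i →
      Λ' = Λk ∧ ∀ i ∈ Λk, s' i = s i)
    -- a minimizer of `P_{ℓq/ℓ1}`
    (cstar : ∀ i : Fin n, Fin (m i) → ℝ) (hfeas : y = ∑ i, B i (cstar i))
    (hopt : ∀ c : ∀ i : Fin n, Fin (m i) → ℝ, y = ∑ i, B i (c i) →
      ∑ i, lqnorm q (cstar i) ≤ ∑ i, lqnorm q (c i)) :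
    ∀ i ∉ Λk, cstar i = 0 :=
  Plq_l1_sufficiency_general q hq m S B hrange hexch y Λk hcard s hs hy cstar hfeas hopt
end

section
/- Mutual-coherence sufficient condition for P'_{ℓ2/ℓ1} (Corollary 4 with q = 2): if (2k−1)μ_S < 1, where μ_S is the mutual subspace coherence, then ζ_k + ζ_{k−1} < 1, and hence the exchange condition of Proposition 4 holds for q = 2 (where ε'_2 = 0). -/
open scoped BigOperators

section Coherence

variable {D n : ℕ}

lemma bddAbove_subCoh_pairs (S : Fin n → Submodule ℝ (EuclideanSpace ℝ (Fin D))) :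
    BddAbove {r : ℝ | ∃ i j : Fin n, i ≠ j ∧ r = subCoh (S i) (S j)} :=
  ⟨1, by rintro _ ⟨i, j, -, rfl⟩; exact subCoh_le_one _ _⟩

lemma muS_nonneg (S : Fin n → Submodule ℝ (EuclideanSpace ℝ (Fin D))) : 0 ≤ muS S :=
  Real.sSup_nonneg <| by
    rintro _ ⟨i, j, -, rfl⟩
    exact subCoh_nonneg _ _

lemma subCoh_le_muS (S : Fin n → Submodule ℝ (EuclideanSpace ℝ (Fin D))) {i j : Fin n}
    (hij : i ≠ j) : subCoh (S i) (S j) ≤ muS S :=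
  le_csSup (bddAbove_subCoh_pairs S) ⟨i, j, hij, rfl⟩

lemma zeta_le_mul_muS (S : Fin n → Submodule ℝ (EuclideanSpace ℝ (Fin D))) (m : ℕ) :
    zeta S m ≤ m * muS S := by
  refine Real.sSup_le ?_ (by have := muS_nonneg S; positivity)
  rintro _ ⟨Λ, i, rfl, hiΛ, rfl⟩
  rw [← nsmul_eq_mul]
  exact Finset.sum_le_card_nsmul Λ _ _ fun j hj ↦
    subCoh_le_muS S fun hij ↦ hiΛ (hij ▸ hj)

end Coherence

theorem mutual_coherence_condition_general {D n : ℕ}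
    (S : Fin n → Submodule ℝ (EuclideanSpace ℝ (Fin D)))
    (k : ℕ) (hk : 1 ≤ k)
    (hcond : (2 * (k : ℝ) - 1) * muS S < 1) :
    zeta S k + zeta S (k - 1) < 1 :=
  calc zeta S k + zeta S (k - 1)
      ≤ k * muS S + ((k - 1 : ℕ) : ℝ) * muS S :=
        add_le_add (zeta_le_mul_muS S k) (zeta_le_mul_muS S (k - 1))
    _ = (2 * (k : ℝ) - 1) * muS S := by push_cast [hk]; ring
    _ < 1 := hcond

/-- Corollary 4 for `q = 2`: if `(2k−1)μ_S < 1` then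
`ζ_k + ζ_{k−1} < 1` (which is the sufficient condition of Proposition 4 for `q = 2`,
where `ε'_2 = 0`). -/
theorem mutual_coherence_condition {D n : ℕ}
    (S : Fin n → Submodule ℝ (EuclideanSpace ℝ (Fin D)))
    (hdisj : ∀ i j : Fin n, i ≠ j → S i ⊓ S j = ⊥)
    (k : ℕ) (hk : 1 ≤ k) (hkn : k ≤ n)
    (hcond : (2 * (k : ℝ) - 1) * muS S < 1) :
    zeta S k + zeta S (k - 1) < 1 :=
  mutual_coherence_condition_general S k hk hcond
end
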